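/- arXiv:2509.10915 — 5 statements merged into one kernel-verified Lean document; each statement's English description precedes it below -/
import Mathlib

section
/- In a commutative unitary ring with only finitely many ideals that is not a field, there exists a nonzero element x such that the annihilator Ann(x) = {r ∈ R : rx = 0} is a prime ideal. -/
/-!
A ring with finitely many ideals is Noetherian, and over a Noetherian ring every nonzero module
has an associated prime, i.e. a prime ideal of the form `Ann(x)` with `x ≠ 0`. Taking the ring
itself as the module gives the element.
-/

theorem IsNoetherianRing.of_finite_ideal (R : Type*) [Semiring R] [Finite (Ideal R)] :
    IsNoetherianRing R :=
  isNoetherian_mk Finite.to_wellFoundedGT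

theorem exists_ne_zero_isPrime_annihilator_span_singleton (R M : Type*) [CommRing R]
    [IsNoetherianRing R] [AddCommGroup M] [Module R M] [Nontrivial M] :
    ∃ x : M, x ≠ 0 ∧ (R ∙ x).annihilator.IsPrime := by
  obtain ⟨P, hP⟩ := associatedPrimes.nonempty R M
  obtain ⟨hPrime, x, rfl⟩ := isAssociatedPrime_iff.mp hP
  rw [Submodule.bot_colon'] at hPrime
  refine ⟨x, ?_, hPrime⟩
  rintro rfl
  exact hPrime.ne_top (by rw [Submodule.annihilator_eq_top_iff, Submodule.span_singleton_eq_bot])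

theorem exists_elem_with_prime_annihilator_general (R : Type*) [CommRing R] [Nontrivial R]
    [Finite (Ideal R)] :
    ∃ x : R, x ≠ 0 ∧ (Ideal.span {x} : Ideal R).annihilator.IsPrime :=
  have := IsNoetherianRing.of_finite_ideal R
  exists_ne_zero_isPrime_annihilator_span_singleton R R

theorem exists_elem_with_prime_annihilator (R : Type*) [CommRing R] [Nontrivial R]
    [Finite (Ideal R)] (hR : ¬ IsField R) :
    ∃ x : R, x ≠ 0 ∧ (Ideal.span {x} : Ideal R).annihilator.IsPrime :=
  exists_elem_with_prime_annihilator_general R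
end

section
/- In a commutative unitary ring with finitely many ideals that is not a field, every maximal ideal has a nonzero annihilator. -/
/-!
A ring with finitely many ideals is artinian, hence noetherian, and in an artinian ring every
prime ideal is minimal. Minimal primes of a noetherian ring are associated primes, i.e. of the form
`Ann(x)` for some `x`; such an `x` is nonzero and is killed by the prime.
-/

namespace Ideal

variable {R : Type*} [CommRing R]

theorem annihilator_ne_bot_of_isAssociatedPrime [IsNoetherianRing R] {P : Ideal R}
    (hP : IsAssociatedPrime P R) : P.annihilator ≠ ⊥ := by
  obtain ⟨hPprime, x, rfl⟩ := isAssociatedPrime_iff.mp hP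
  have hx : x ≠ 0 := by
    rintro rfl
    exact hPprime.ne_top (by simp)
  refine (Submodule.ne_bot_iff _).mpr ⟨x, Submodule.mem_annihilator.mpr fun a ha ↦ ?_, hx⟩
  simpa [Submodule.mem_colon_singleton, mul_comm] using ha

theorem isAssociatedPrime_of_isArtinianRing [IsArtinianRing R] (P : Ideal R) [P.IsPrime] :
    IsAssociatedPrime P R := by
  apply Module.associatedPrimes.minimalPrimes_annihilator_subset_associatedPrimes R R
  rw [Module.annihilator_eq_bot.mpr inferInstance]
  exact IsArtinianRing.mem_minimalPrimes bot_le

theorem annihilator_ne_bot_of_isArtinianRing [IsArtinianRing R] (P : Ideal R) [P.IsPrime] :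
    P.annihilator ≠ ⊥ :=
  annihilator_ne_bot_of_isAssociatedPrime (isAssociatedPrime_of_isArtinianRing P)

end Ideal

theorem maximal_ideal_annihilator_ne_bot_general (R : Type*) [CommRing R]
    [Finite (Ideal R)] (M : Ideal R) (hM : M.IsMaximal) :
    M.annihilator ≠ ⊥ := by
  have : IsArtinianRing R := Finite.to_wellFoundedLT
  have := hM.isPrime
  exact M.annihilator_ne_bot_of_isArtinianRing

theorem maximal_ideal_annihilator_ne_bot (R : Type*) [CommRing R] [Nontrivial R]
    [Finite (Ideal R)] (hR : ¬ IsField R) (M : Ideal R) (hM : M.IsMaximal) :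
    M.annihilator ≠ ⊥ :=
  maximal_ideal_annihilator_ne_bot_general R M hM
end

section
/- Let R be a commutative unitary ring with finitely many ideals and M a maximal ideal of R such that Ann(M) ≠ (0). Then there exists a minimal nonzero ideal J of R with M = Ann(J). -/
/-! A minimal nonzero ideal `J ≤ Ann(M)` exists because the ideal lattice is finite. Since
`J · M = 0`, we get `M ≤ Ann(J)`, and `Ann(J) ≠ R` because `J ≠ 0`; maximality of `M` forces
`M = Ann(J)`. -/

namespace Ideal

variable {R : Type*} [CommRing R]

theorem le_annihilator_comm {I J : Ideal R} : I ≤ J.annihilator ↔ J ≤ I.annihilator := by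
  rw [Submodule.le_annihilator_iff, Submodule.le_annihilator_iff, smul_eq_mul, smul_eq_mul,
    mul_comm]

theorem IsMaximal.exists_isAtom_annihilator_eq [IsAtomic (Ideal R)] {M : Ideal R}
    (hM : M.IsMaximal) (hAnn : M.annihilator ≠ ⊥) :
    ∃ J : Ideal R, IsAtom J ∧ M = J.annihilator := by
  obtain ⟨J, hJ, hJM⟩ := (eq_bot_or_exists_atom_le M.annihilator).resolve_left hAnn
  have hJ_ne_top : J.annihilator ≠ ⊤ := mt Submodule.annihilator_eq_top_iff.mp hJ.1
  exact ⟨J, hJ, hM.eq_of_le hJ_ne_top (le_annihilator_comm.mp hJM)⟩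

end Ideal

theorem maximal_is_annihilator_of_minimal (R : Type*) [CommRing R] [Finite (Ideal R)]
    (M : Ideal R) (hM : M.IsMaximal) (hAnn : M.annihilator ≠ ⊥) :
    ∃ J : Ideal R, J ≠ ⊥ ∧ (∀ K : Ideal R, K ≠ ⊥ → K ≤ J → K = J) ∧
      M = J.annihilator := by
  obtain ⟨J, hJ, hMJ⟩ := hM.exists_isAtom_annihilator_eq hAnn
  exact ⟨J, hJ.1, fun K hK hKJ => (hJ.le_iff.mp hKJ).resolve_left hK, hMJ⟩
end

section
/- In any BL-algebra, (x ⊙ y)** = x** ⊙ y** for all x, y, where z* denotes z → 0. -/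
/-- A BL-algebra: a bounded commutative residuated lattice satisfying
prelinearity and divisibility. The monoid unit coincides with the top element. -/
class BLAlgebra (α : Type*) extends Lattice α, CommMonoid α, BoundedOrder α where
  himp : α → α → α
  residuation : ∀ x y z : α, x * z ≤ y ↔ z ≤ himp x y
  prelinearity : ∀ x y : α, himp x y ⊔ himp y x = ⊤
  divisibility : ∀ x y : α, x * himp x y = x ⊓ y
  one_eq_top : (1 : α) = ⊤

/-- Negation in a BL-algebra: `x* = x → 0`. -/
def BLneg {α : Type*} [BLAlgebra α] (x : α) : α := BLAlgebra.himp x ⊥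

namespace BLAux

variable {α : Type*} [BLAlgebra α]

local infixr:60 " ⇨ " => BLAlgebra.himp

lemma res {x y z : α} : x * z ≤ y ↔ z ≤ x ⇨ y := BLAlgebra.residuation x y z

lemma mul_himp_le (x y : α) : x * (x ⇨ y) ≤ y := res.mpr le_rfl

lemma mono_r {x y z : α} (h : y ≤ z) : x * y ≤ x * z :=
  res.mpr (h.trans (res.mp le_rfl))

lemma mono_l {x y z : α} (h : y ≤ z) : y * x ≤ z * x := by
  rw [mul_comm y x, mul_comm z x]; exact mono_r h

lemma mul_le_left (x y : α) : x * y ≤ x := by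
  calc x * y ≤ x * ⊤ := mono_r le_top
    _ = x * 1 := by rw [BLAlgebra.one_eq_top]
    _ = x := mul_one x

lemma himp_anti {a b : α} (c : α) (h : a ≤ b) : (b ⇨ c) ≤ (a ⇨ c) :=
  res.mp ((mono_l (x := b ⇨ c) h).trans (mul_himp_le b c))

lemma himp_mono {b c : α} (a : α) (h : b ≤ c) : (a ⇨ b) ≤ (a ⇨ c) :=
  res.mp ((mul_himp_le a b).trans h)

lemma res2 {a b c z : α} : z ≤ a ⇨ (b ⇨ c) ↔ a * b * z ≤ c := by
  constructor
  · intro h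
    have h1 : a * z ≤ b ⇨ c := res.mpr h
    calc a * b * z = b * (a * z) := by simp [mul_comm, mul_assoc, mul_left_comm]
      _ ≤ b * (b ⇨ c) := mono_r h1
      _ ≤ c := mul_himp_le b c
  · intro h
    refine res.mp (res.mp ?_)
    calc b * (a * z) = a * b * z := by simp [mul_comm, mul_assoc, mul_left_comm]
      _ ≤ c := h

lemma himp_himp (a b c : α) : (a * b) ⇨ c = a ⇨ (b ⇨ c) := by
  refine le_antisymm (res2.mpr (mul_himp_le (a * b) c)) (res.mp ?_)
  exact res2.mp le_rfl

lemma neg_mul (x y : α) : BLneg (x * y) = x ⇨ BLneg y := himp_himp x y ⊥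

lemma himp_neg_comm (x y : α) : x ⇨ BLneg y = y ⇨ BLneg x := by
  rw [← neg_mul, ← neg_mul, mul_comm]

lemma mul_neg_le (x : α) : x * BLneg x ≤ ⊥ := mul_himp_le x ⊥

lemma le_negneg (x : α) : x ≤ BLneg (BLneg x) := by
  refine res.mp ?_
  rw [mul_comm]; exact mul_neg_le x

lemma neg_anti {a b : α} (h : a ≤ b) : BLneg b ≤ BLneg a := himp_anti ⊥ h

lemma neg3 (x : α) : BLneg (BLneg (BLneg x)) = BLneg x :=
  le_antisymm (neg_anti (le_negneg x)) (le_negneg (BLneg x))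

lemma mul_sup (x a b : α) : x * (a ⊔ b) = x * a ⊔ x * b :=
  le_antisymm (res.mpr (sup_le (res.mp le_sup_left) (res.mp le_sup_right)))
    (sup_le (mono_r le_sup_left) (mono_r le_sup_right))

/-- Easy direction: `x** ⊙ y** ≤ (x⊙y)**`. -/
lemma easy (x y : α) :
    BLneg (BLneg x) * BLneg (BLneg y) ≤ BLneg (BLneg (x * y)) := by
  have s2 : BLneg (x * y) * y ≤ BLneg x := by
    refine res.mp ?_
    calc x * (BLneg (x * y) * y) = (x * y) * BLneg (x * y) := by simp [mul_comm, mul_assoc, mul_left_comm]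
      _ ≤ ⊥ := mul_neg_le (x * y)
  have s3 : BLneg (x * y) * y * BLneg (BLneg x) ≤ ⊥ :=
    (mono_l s2).trans (mul_neg_le (BLneg x))
  have s4 : BLneg (x * y) * BLneg (BLneg x) ≤ BLneg y := by
    refine res.mp ?_
    calc y * (BLneg (x * y) * BLneg (BLneg x)) = BLneg (x * y) * y * BLneg (BLneg x) := by simp [mul_comm, mul_assoc, mul_left_comm]
      _ ≤ ⊥ := s3
  refine res.mp ?_
  calc BLneg (x * y) * (BLneg (BLneg x) * BLneg (BLneg y))
      = (BLneg (x * y) * BLneg (BLneg x)) * BLneg (BLneg y) := by simp [mul_comm, mul_assoc, mul_left_comm]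
    _ ≤ BLneg y * BLneg (BLneg y) := mono_l s4
    _ ≤ ⊥ := mul_neg_le (BLneg y)

/-- Hard direction: `(x⊙y)** ≤ x** ⊙ y**`. -/
lemma hard (x y : α) :
    BLneg (BLneg (x * y)) ≤ BLneg (BLneg x) * BLneg (BLneg y) := by
  set c := BLneg (BLneg (x * y)) with hc
  set d := BLneg (BLneg x) ⇨ c with hd0
  have h_c_le : c ≤ BLneg (BLneg x) := neg_anti (neg_anti (mul_le_left x y))
  have hcd : c = BLneg (BLneg x) * d := by
    rw [hd0, BLAlgebra.divisibility, inf_eq_right.mpr h_c_le]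
  -- rewrite d
  have hd : d = BLneg (x * y) ⇨ BLneg x := by
    rw [hd0, hc]
    rw [show BLneg (BLneg x) ⇨ BLneg (BLneg (x * y))
        = BLneg (x * y) ⇨ BLneg (BLneg (BLneg x)) from himp_neg_comm _ _, neg3]
  have hNxy : BLneg (x * y) = x ⇨ BLneg y := neg_mul x y
  -- prelinearity split
  have hP : (x ⇨ BLneg y) ⊔ (BLneg y ⇨ x) = (1 : α) :=
    (BLAlgebra.prelinearity x (BLneg y)).trans BLAlgebra.one_eq_top.symm
  have hsplit : c = BLneg (BLneg x) * (d * (x ⇨ BLneg y))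
      ⊔ BLneg (BLneg x) * (d * (BLneg y ⇨ x)) := by
    calc c = BLneg (BLneg x) * d := hcd
      _ = BLneg (BLneg x) * (d * ((x ⇨ BLneg y) ⊔ (BLneg y ⇨ x))) := by rw [hP, mul_one]
      _ = _ := by rw [mul_sup, mul_sup]
  -- term 1 is ⊥
  have hT1 : BLneg (BLneg x) * (d * (x ⇨ BLneg y)) ≤ ⊥ := by
    have h1 : d * (x ⇨ BLneg y) ≤ BLneg x := by
      rw [hd, hNxy, mul_comm]
      exact mul_himp_le _ _
    calc BLneg (BLneg x) * (d * (x ⇨ BLneg y)) ≤ BLneg (BLneg x) * BLneg x := mono_r h1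
      _ = BLneg x * BLneg (BLneg x) := mul_comm _ _
      _ ≤ ⊥ := mul_neg_le (BLneg x)
  -- term 2 is ≤ x** ⊙ y**
  have hT2 : BLneg (BLneg x) * (d * (BLneg y ⇨ x)) ≤ BLneg (BLneg x) * BLneg (BLneg y) := by
    refine mono_r (res.mp ?_)
    -- goal : BLneg y * (d * (BLneg y ⇨ x)) ≤ ⊥
    have hm : BLneg y * (BLneg y ⇨ x) = BLneg y ⊓ x := BLAlgebra.divisibility _ _
    have key : d * (BLneg y ⊓ x) ≤ ⊥ := by
      set m := BLneg y ⊓ x with hmdef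
      have hmx : m ≤ x := inf_le_right
      have hmny : m ≤ BLneg y := inf_le_left
      have hdle : d ≤ (x ⇨ m) ⇨ BLneg x := by
        rw [hd, hNxy]
        exact himp_anti _ (himp_mono x hmny)
      have hmmul : m = x * (x ⇨ m) := by
        rw [BLAlgebra.divisibility, inf_eq_right.mpr hmx]
      have h2 : d * (x ⇨ m) ≤ BLneg x := by
        calc d * (x ⇨ m) ≤ ((x ⇨ m) ⇨ BLneg x) * (x ⇨ m) := mono_l hdle
          _ = (x ⇨ m) * ((x ⇨ m) ⇨ BLneg x) := mul_comm _ _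
          _ ≤ BLneg x := mul_himp_le _ _
      calc d * m = d * (x * (x ⇨ m)) := by rw [← hmmul]
        _ = (d * (x ⇨ m)) * x := by simp [mul_comm, mul_assoc, mul_left_comm]
        _ ≤ BLneg x * x := mono_l h2
        _ = x * BLneg x := mul_comm _ _
        _ ≤ ⊥ := mul_neg_le x
    calc BLneg y * (d * (BLneg y ⇨ x)) = d * (BLneg y * (BLneg y ⇨ x)) := by simp [mul_comm, mul_assoc, mul_left_comm]
      _ = d * (BLneg y ⊓ x) := by rw [hm]
      _ ≤ ⊥ := key
  rw [hsplit]
  exact sup_le (hT1.trans bot_le) hT2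

end BLAux

theorem blneg_blneg_mul {α : Type*} [BLAlgebra α] (x y : α) :
    BLneg (BLneg (x * y)) = BLneg (BLneg x) * BLneg (BLneg y) :=
  le_antisymm (BLAux.hard x y) (BLAux.easy x y)
end

section
/- If a BL-algebra L is such that x** = x for every x ∈ L, then defining x ⊕ y = (x* ⊙ y*)*, the structure (L, ⊕, *, 0) is an MV-algebra. -/
/-- The MV-addition defined from a BL-algebra: `x ⊕ y = (x* ⊙ y*)*`. -/
def BLadd {α : Type*} [BLAlgebra α] (x y : α) : α := BLneg (BLneg x * BLneg y)

namespace BLaux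
open BLAlgebra
variable {α : Type*} [BLAlgebra α]

lemma mp (x y : α) : x * himp x y ≤ y :=
  (residuation x y (himp x y)).mpr le_rfl

lemma mul_le_mul_left' {z z' : α} (h : z ≤ z') (x : α) : x * z ≤ x * z' :=
  (residuation x (x * z') z).mpr (h.trans ((residuation x (x * z') z').mp le_rfl))

lemma mul_le_mul_right' {x x' : α} (h : x ≤ x') (z : α) : x * z ≤ x' * z := by
  rw [mul_comm x z, mul_comm x' z]; exact mul_le_mul_left' h z

lemma mul_le_right (x y : α) : x * y ≤ y := by
  calc x * y ≤ 1 * y := by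
        rw [one_eq_top]; exact mul_le_mul_right' le_top y
    _ = y := one_mul y

lemma mul_le_left (x y : α) : x * y ≤ x := by rw [mul_comm]; exact mul_le_right y x

lemma himp_mono_right {y y' : α} (h : y ≤ y') (x : α) : himp x y ≤ himp x y' :=
  (residuation x y' (himp x y)).mp ((mp x y).trans h)

lemma himp_anti_left {x x' : α} (h : x ≤ x') (y : α) : himp x' y ≤ himp x y :=
  (residuation x y (himp x' y)).mp ((mul_le_mul_right' h _).trans (mp x' y))

lemma curry (x y z : α) : himp (x * y) z = himp x (himp y z) := by
  apply le_antisymm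
  · refine (residuation x (himp y z) _).mp ?_
    refine (residuation y z _).mp ?_
    calc y * (x * himp (x * y) z) = (x * y) * himp (x * y) z := by
          rw [← mul_assoc, mul_comm y x]
      _ ≤ z := mp _ _
  · refine (residuation (x * y) z _).mp ?_
    calc (x * y) * himp x (himp y z) = y * (x * himp x (himp y z)) := by
          rw [← mul_assoc, mul_comm y x]
      _ ≤ y * himp y z := mul_le_mul_left' (mp _ _) y
      _ ≤ z := mp _ _

lemma himp_sup (x y z : α) : himp (x ⊔ y) z = himp x z ⊓ himp y z := by
  apply le_antisymm
  · exact le_inf (himp_anti_left le_sup_left z) (himp_anti_left le_sup_right z)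
  · refine (residuation (x ⊔ y) z _).mp ?_
    rw [mul_comm]
    refine (residuation _ z _).mpr (sup_le ?_ ?_)
    · refine (residuation _ z x).mp ?_
      calc (himp x z ⊓ himp y z) * x = x * (himp x z ⊓ himp y z) := mul_comm _ _
        _ ≤ x * himp x z := mul_le_mul_left' inf_le_left x
        _ ≤ z := mp _ _
    · refine (residuation _ z y).mp ?_
      calc (himp x z ⊓ himp y z) * y = y * (himp x z ⊓ himp y z) := mul_comm _ _
        _ ≤ y * himp y z := mul_le_mul_left' inf_le_right y
        _ ≤ z := mp _ _

section dn
variable (hdn : ∀ x : α, BLneg (BLneg x) = x)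
include hdn

-- contraposition
lemma contrapose (x y : α) : himp x y = himp (BLneg y) (BLneg x) := by
  conv_lhs => rw [← hdn y]
  unfold BLneg
  rw [← curry, mul_comm, curry]

lemma neg_himp (x y : α) : BLneg (himp x y) = x * BLneg y := by
  have h : himp x y = BLneg (x * BLneg y) := by
    conv_lhs => rw [← hdn y]
    unfold BLneg
    rw [← curry]
  rw [h, hdn]

lemma neg_anti {x y : α} (h : x ≤ y) : BLneg y ≤ BLneg x := himp_anti_left h ⊥

lemma neg_sup (x y : α) : BLneg (x ⊔ y) = BLneg x ⊓ BLneg y := himp_sup x y ⊥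

lemma key (x y : α) : himp (himp x y) y = x ⊔ y := by
  apply le_antisymm
  · -- via negation: ¬(x⊔y) ≤ ¬(himp (himp x y) y)
    have h1 : BLneg (x ⊔ y) ≤ BLneg (himp (himp x y) y) := by
      rw [neg_sup hdn, neg_himp hdn]
      have hd := divisibility (BLneg y) (BLneg x)
      rw [← contrapose hdn x y] at hd
      rw [inf_comm, ← hd, mul_comm]
    have := neg_anti hdn h1
    rwa [hdn, hdn] at this
  · refine sup_le ?_ ?_
    · refine (residuation _ y x).mp ?_
      rw [mul_comm]; exact mp x y
    · exact (residuation _ y y).mp (mul_le_right _ y)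
end dn

lemma neg_bot : BLneg (⊥ : α) = ⊤ :=
  le_antisymm le_top ((residuation ⊥ ⊥ ⊤).mp (mul_le_left ⊥ ⊤))

lemma mul_bot (x : α) : x * ⊥ = ⊥ := le_antisymm (mul_le_right x ⊥) bot_le

section dn2
variable (hdn : ∀ x : α, BLneg (BLneg x) = x)
include hdn

lemma add_neg_left (a b : α) : BLadd (BLneg a) b = himp a b := by
  unfold BLadd
  rw [hdn a]
  show himp (a * BLneg b) ⊥ = himp a b
  rw [curry]
  show himp a (BLneg (BLneg b)) = himp a b
  rw [hdn]

end dn2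
end BLaux

/-- If a BL-algebra satisfies `x** = x` for all `x`, then `(L, ⊕, *, 0)` with
`x ⊕ y = (x* ⊙ y*)*` is an MV-algebra: `⊕` is an abelian monoid operation with
unit `0 = ⊥`, `(x*)* = x`, `x ⊕ 0* = 0*`, and `(x* ⊕ y)* ⊕ y = (y* ⊕ x)* ⊕ x`. -/
theorem blalgebra_dn_is_mv {α : Type*} [BLAlgebra α]
    (hdn : ∀ x : α, BLneg (BLneg x) = x) :
    (∀ x y : α, BLadd x y = BLadd y x) ∧
    (∀ x y z : α, BLadd (BLadd x y) z = BLadd x (BLadd y z)) ∧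
    (∀ x : α, BLadd x ⊥ = x) ∧
    (∀ x : α, BLneg (BLneg x) = x) ∧
    (∀ x : α, BLadd x (BLneg ⊥) = BLneg ⊥) ∧
    (∀ x y : α, BLadd (BLneg (BLadd (BLneg x) y)) y
              = BLadd (BLneg (BLadd (BLneg y) x)) x) := by
  refine ⟨?_, ?_, ?_, hdn, ?_, ?_⟩
  · intro x y
    unfold BLadd
    rw [mul_comm]
  · intro x y z
    unfold BLadd
    rw [hdn, hdn, mul_assoc]
  · intro x
    unfold BLadd
    rw [BLaux.neg_bot, ← BLAlgebra.one_eq_top, mul_one, hdn]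
  · intro x
    unfold BLadd
    rw [hdn, BLaux.mul_bot]
  · intro x y
    rw [BLaux.add_neg_left hdn x y, BLaux.add_neg_left hdn y x,
        BLaux.add_neg_left hdn (BLAlgebra.himp x y) y,
        BLaux.add_neg_left hdn (BLAlgebra.himp y x) x,
        BLaux.key hdn x y, BLaux.key hdn y x, sup_comm]
end
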